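/- Let ω: (ℝ² \ {0})³ → ℝ be defined on triples (v₀,v₁,v₂) of pairwise linearly independent nonzero vectors by ω(v₀,v₁,v₂) = Σ_{i<j} (−1)^{i+j} [ ⟨v_i/d_{ij}, v_j/‖v_j‖²⟩ + ⟨v_j/d_{ij}, v_i/‖v_i‖²⟩ ], where d_{ij} = det(v_i|v_j) and ⟨·,·⟩ is the standard inner product on ℝ². Then ω is SL(2,R)-invariant: ω(g·v₀, g·v₁, g·v₂) = ω(v₀,v₁,v₂) for all g ∈ SL(2,R). -/
import Mathlib


open Matrix

/-- Determinant of the 2×2 matrix with columns `u, v`. -/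
def ddet (u v : Fin 2 → ℝ) : ℝ := u 0 * v 1 - u 1 * v 0

/-- Standard inner product on `ℝ²`. -/
def ip (u v : Fin 2 → ℝ) : ℝ := u 0 * v 0 + u 1 * v 1

/-- Squared euclidean norm on `ℝ²`. -/
def nsq (u : Fin 2 → ℝ) : ℝ := u 0 ^ 2 + u 1 ^ 2

/-- `⟨u/d_{u,v}, v/‖v‖²⟩ + ⟨v/d_{u,v}, u/‖u‖²⟩`. -/
noncomputable def pairTerm (u v : Fin 2 → ℝ) : ℝ :=
  ip ((ddet u v)⁻¹ • u) ((nsq v)⁻¹ • v) + ip ((ddet u v)⁻¹ • v) ((nsq u)⁻¹ • u)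

/-- The 2-cochain `ω(v₀,v₁,v₂) = Σ_{i<j} (−1)^{i+j} [⟨v_i/d_{ij}, v_j/‖v_j‖²⟩ +
⟨v_j/d_{ij}, v_i/‖v_i‖²⟩]`. -/
noncomputable def omegaCocycle (v₀ v₁ v₂ : Fin 2 → ℝ) : ℝ :=
  -pairTerm v₀ v₁ + pairTerm v₀ v₂ - pairTerm v₁ v₂

/-- Auxiliary: `⟨u,w⟩ / (det(u|w)‖w‖²)`. -/
noncomputable def fAux (u w : Fin 2 → ℝ) : ℝ := ip u w / (ddet u w * nsq w)

lemma ddet_swap (u v : Fin 2 → ℝ) : ddet v u = -ddet u v := by unfold ddet; ring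

lemma nsq_ne_zero_of_ddet {u v : Fin 2 → ℝ} (h : ddet u v ≠ 0) : nsq u ≠ 0 := by
  intro hn
  apply h
  unfold nsq at hn
  have h0 : u 0 = 0 := by
    have h2 : u 0 ^ 2 = 0 := by nlinarith [sq_nonneg (u 0), sq_nonneg (u 1)]
    exact pow_eq_zero_iff two_ne_zero |>.mp h2
  have h1 : u 1 = 0 := by
    have h2 : u 1 ^ 2 = 0 := by nlinarith [sq_nonneg (u 0), sq_nonneg (u 1)]
    exact pow_eq_zero_iff two_ne_zero |>.mp h2
  simp [ddet, h0, h1]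

lemma pairTerm_eq (u v : Fin 2 → ℝ) : pairTerm u v = fAux u v - fAux v u := by
  unfold pairTerm fAux ip
  rw [ddet_swap v u]
  simp only [Pi.smul_apply, smul_eq_mul]
  field_simp
  ring

/-- The key 2D identity: `f(u,w) − f(v,w) = det(v|u)/(det(u|w)det(v|w))`. -/
lemma fAux_diff (u v w : Fin 2 → ℝ) (huw : ddet u w ≠ 0) (hvw : ddet v w ≠ 0)
    (nw : nsq w ≠ 0) :
    fAux u w - fAux v w = ddet v u / (ddet u w * ddet v w) := by
  unfold fAux
  rw [div_sub_div _ _ (mul_ne_zero huw nw) (mul_ne_zero hvw nw),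
    div_eq_div_iff (by positivity) (mul_ne_zero huw hvw)]
  unfold ip ddet nsq
  ring

/-- `ω` only depends on the pairwise determinants. -/
lemma omega_eq_det (v₀ v₁ v₂ : Fin 2 → ℝ)
    (h01 : ddet v₀ v₁ ≠ 0) (h02 : ddet v₀ v₂ ≠ 0) (h12 : ddet v₁ v₂ ≠ 0) :
    omegaCocycle v₀ v₁ v₂ =
      -(ddet v₁ v₂ / (ddet v₀ v₁ * ddet v₀ v₂))
        - ddet v₀ v₂ / (ddet v₀ v₁ * ddet v₁ v₂)
        - ddet v₀ v₁ / (ddet v₀ v₂ * ddet v₁ v₂) := by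
  have n0 := nsq_ne_zero_of_ddet h01
  have n1 := nsq_ne_zero_of_ddet (ddet_swap v₀ v₁ ▸ neg_ne_zero.mpr h01)
  have n2 := nsq_ne_zero_of_ddet (ddet_swap v₀ v₂ ▸ neg_ne_zero.mpr h02)
  have h10 : ddet v₁ v₀ ≠ 0 := ddet_swap v₀ v₁ ▸ neg_ne_zero.mpr h01
  have h20 : ddet v₂ v₀ ≠ 0 := ddet_swap v₀ v₂ ▸ neg_ne_zero.mpr h02
  have h21 : ddet v₂ v₁ ≠ 0 := ddet_swap v₁ v₂ ▸ neg_ne_zero.mpr h12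
  have e1 := fAux_diff v₁ v₂ v₀ h10 h20 n0
  have e2 := fAux_diff v₂ v₀ v₁ h21 h01 n1
  have e3 := fAux_diff v₀ v₁ v₂ h02 h12 n2
  simp only [ddet_swap v₀ v₁, ddet_swap v₀ v₂, ddet_swap v₁ v₂] at e1 e2 e3
  rw [omegaCocycle, pairTerm_eq, pairTerm_eq, pairTerm_eq]
  linear_combination e1 + e2 + e3

lemma ddet_mulVec (g : Matrix.SpecialLinearGroup (Fin 2) ℝ) (u v : Fin 2 → ℝ) :
    ddet ((g : Matrix (Fin 2) (Fin 2) ℝ).mulVec u) ((g : Matrix (Fin 2) (Fin 2) ℝ).mulVec v)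
      = ddet u v := by
  have hdet : (g : Matrix (Fin 2) (Fin 2) ℝ) 0 0 * (g : Matrix (Fin 2) (Fin 2) ℝ) 1 1
      - (g : Matrix (Fin 2) (Fin 2) ℝ) 0 1 * (g : Matrix (Fin 2) (Fin 2) ℝ) 1 0 = 1 := by
    have := g.2
    rwa [Matrix.det_fin_two] at this
  simp only [ddet, Matrix.mulVec, dotProduct, Fin.sum_univ_two]
  linear_combination (u 0 * v 1 - u 1 * v 0) * hdet

/-- `ω` is `SL(2,ℝ)`-invariant on triples of pairwise linearly independent vectors. -/
theorem omega_sl2_invariant (g : Matrix.SpecialLinearGroup (Fin 2) ℝ)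
    (v₀ v₁ v₂ : Fin 2 → ℝ)
    (h01 : ddet v₀ v₁ ≠ 0) (h02 : ddet v₀ v₂ ≠ 0) (h12 : ddet v₁ v₂ ≠ 0) :
    omegaCocycle ((g : Matrix (Fin 2) (Fin 2) ℝ).mulVec v₀)
        ((g : Matrix (Fin 2) (Fin 2) ℝ).mulVec v₁)
        ((g : Matrix (Fin 2) (Fin 2) ℝ).mulVec v₂) =
      omegaCocycle v₀ v₁ v₂ := by
  rw [omega_eq_det _ _ _ (by rw [ddet_mulVec]; exact h01) (by rw [ddet_mulVec]; exact h02)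
    (by rw [ddet_mulVec]; exact h12), omega_eq_det _ _ _ h01 h02 h12,
    ddet_mulVec, ddet_mulVec, ddet_mulVec]
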